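/- Let ω be a compactly supported finite nonnegative Borel measure on ℝ², and let G(r) = ω(closedBall(0,r)) for r > 0, G(r) = 0 otherwise, be its radial cumulative distribution function. Then H⁺(ω) ≤ H⁺(dG), i.e. ∫_{ℝ²}∫_{ℝ²} log⁺(1/|x−y|) dω(x) dω(y) ≤ ∫_ℝ∫_ℝ log⁺(1/|r−s|) dG(r) dG(s). -/

import Mathlib

/-!
Since `|‖x‖ - ‖y‖| ≤ ‖x - y‖` and `log⁺ (1 / ·)` is antitone, replacing two points of the plane by
their norms can only increase the kernel, so `H⁺(ω)` is at most the energy of the push-forward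
`ω.map ‖·‖`. That push-forward is `dG`: its distribution function `r ↦ ω {‖x‖ ≤ r}` agrees with `G`
off `r = 0` and is right-continuous, so it equals `G(r⁺)` everywhere.
-/

open MeasureTheory Set Metric
open scoped ENNReal Classical

/-- The plane `ℝ²` with the Euclidean norm. -/
abbrev Plane := EuclideanSpace ℝ (Fin 2)

/-- `log⁺ t = max (log t) 0`. -/
noncomputable def logPlus (t : ℝ) : ℝ := max (Real.log t) 0

/-- The kernel `log⁺ (1/|x-y|)` on `ℝ²`, valued in `ℝ≥0∞` (it is `∞` on the diagonal). -/
noncomputable def logKernel2 (x y : Plane) : ℝ≥0∞ :=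
  if x = y then ⊤ else ENNReal.ofReal (logPlus (1 / dist x y))

/-- Positive logarithmic energy of a nonnegative measure `ω` on `ℝ²`. -/
noncomputable def Hplus2 (ω : Measure Plane) : ℝ≥0∞ :=
  ∫⁻ x, ∫⁻ y, logKernel2 x y ∂ω ∂ω

/-- The kernel `log⁺ (1/|r-s|)` on `ℝ`, valued in `ℝ≥0∞` (it is `∞` on the diagonal). -/
noncomputable def logKernel1 (x y : ℝ) : ℝ≥0∞ :=
  if x = y then ⊤ else ENNReal.ofReal (logPlus (1 / |x - y|))

/-- Positive logarithmic energy of a nonnegative measure `μ` on `ℝ`. -/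
noncomputable def HplusM (μ : Measure ℝ) : ℝ≥0∞ :=
  ∫⁻ x, ∫⁻ y, logKernel1 x y ∂μ ∂μ

/-- The radial cumulative distribution function of a measure `ω` on `ℝ²`. -/
noncomputable def radialCDF (ω : Measure Plane) (r : ℝ) : ℝ :=
  if 0 < r then (ω (Metric.closedBall 0 r)).toReal else 0

open Filter Topology

lemma logPlus_one_div_le_of_le {a b : ℝ} (ha : 0 < a) (hab : a ≤ b) :
    logPlus (1 / b) ≤ logPlus (1 / a) :=
  max_le_max (Real.log_le_log (by have := ha.trans_le hab; positivity)
    (one_div_le_one_div_of_le ha hab)) le_rfl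

lemma logKernel2_le_logKernel1_norm (x y : Plane) : logKernel2 x y ≤ logKernel1 ‖x‖ ‖y‖ := by
  by_cases hnorm : ‖x‖ = ‖y‖
  · simp [logKernel1, hnorm]
  have hxy : x ≠ y := fun h => hnorm (by rw [h])
  rw [logKernel2, if_neg hxy, logKernel1, if_neg hnorm]
  exact ENNReal.ofReal_le_ofReal <| logPlus_one_div_le_of_le (abs_pos.2 (sub_ne_zero.2 hnorm))
    (dist_eq_norm x y ▸ abs_norm_sub_norm_le x y)

lemma measurable_logKernel1 : Measurable (Function.uncurry logKernel1) := by
  unfold logKernel1 logPlus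
  exact Measurable.ite (measurableSet_eq_fun measurable_fst measurable_snd) measurable_const
    (ENNReal.measurable_ofReal.comp ((Real.measurable_log.comp
      (measurable_const.div (measurable_fst.sub measurable_snd).abs)).max measurable_const))

lemma hplus2_le_hplusM_map_norm (ω : Measure Plane) [SFinite ω] :
    Hplus2 ω ≤ HplusM (ω.map (‖·‖)) := by
  have hk : ∀ r, Measurable (logKernel1 r) := fun r =>
    measurable_logKernel1.comp measurable_prodMk_left
  calc Hplus2 ω ≤ ∫⁻ x, ∫⁻ y, logKernel1 ‖x‖ ‖y‖ ∂ω ∂ω :=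
        lintegral_mono fun x => lintegral_mono fun y => logKernel2_le_logKernel1_norm x y
    _ = ∫⁻ x, ∫⁻ s, logKernel1 ‖x‖ s ∂(ω.map (‖·‖)) ∂ω :=
        lintegral_congr fun x => (lintegral_map (hk ‖x‖) measurable_norm).symm
    _ = HplusM (ω.map (‖·‖)) :=
        (lintegral_map measurable_logKernel1.lintegral_prod_right' measurable_norm).symm

lemma tendsto_measure_Iic_nhdsGT (ν : Measure ℝ) [IsFiniteMeasure ν] (b : ℝ) :
    Tendsto (fun r => ν (Iic r)) (𝓝[>] b) (𝓝 (ν (Iic b))) := by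
  have hInter : ⋂ r > b, Iic r = Iic b := by
    ext x
    simpa using forall_gt_imp_ge_iff_le_of_dense
  rw [← hInter]
  exact tendsto_measure_biInter_gt (fun _ _ => measurableSet_Iic.nullMeasurableSet)
    (fun _ _ _ hij => Iic_subset_Iic.2 hij) ⟨b + 1, lt_add_one b, measure_ne_top ν _⟩

lemma radialCDF_eq_measureReal_map_norm_Iic (ω : Measure Plane) {r : ℝ} (hr : r ≠ 0) :
    radialCDF ω r = (ω.map (‖·‖)).real (Iic r) := by
  rw [measureReal_def, Measure.map_apply measurable_norm measurableSet_Iic, radialCDF]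
  rcases hr.lt_or_gt with hneg | hpos
  · have hempty : (‖·‖) ⁻¹' Iic r = (∅ : Set Plane) :=
      eq_empty_of_forall_notMem fun x hx => (hneg.trans_le (norm_nonneg x)).not_ge hx
    simp [hempty, hneg.not_gt]
  · have hball : (‖·‖) ⁻¹' Iic r = closedBall (0 : Plane) r := by
      ext x; simp
    rw [if_pos hpos, hball]

lemma rightLim_radialCDF (ω : Measure Plane) [IsFiniteMeasure ω] (b : ℝ) :
    Function.rightLim (radialCDF ω) b = (ω.map (‖·‖)).real (Iic b) := by
  apply rightLim_eq_of_tendsto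
  have hne : ∀ᶠ r in 𝓝[>] b, r ≠ 0 := by
    rcases lt_or_ge b 0 with hb | hb
    · exact eventually_nhdsWithin_of_eventually_nhds (isOpen_ne.eventually_mem hb.ne)
    · filter_upwards [self_mem_nhdsWithin] with r hr using (hb.trans_lt hr).ne'
  refine ((ENNReal.tendsto_toReal (measure_ne_top _ _)).comp
    (tendsto_measure_Iic_nhdsGT _ b)).congr' ?_
  filter_upwards [hne] with r hr using (radialCDF_eq_measureReal_map_norm_Iic ω hr).symm

lemma eq_map_norm_of_measure_Ioc (ω : Measure Plane) [IsFiniteMeasure ω] (μ : Measure ℝ)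
    (hμ : ∀ a b : ℝ, a ≤ b → μ (Set.Ioc a b) =
      ENNReal.ofReal (Function.rightLim (radialCDF ω) b - Function.rightLim (radialCDF ω) a)) :
    μ = ω.map (‖·‖) := by
  refine Measure.ext_of_Ioc' μ _ (fun a b hab => by simp [hμ a b hab.le]) fun a b hab => ?_
  rw [hμ a b hab.le, rightLim_radialCDF, rightLim_radialCDF, ← measureReal_sdiff
    (Iic_subset_Iic.2 hab.le) measurableSet_Iic, Iic_sdiff_Iic, ofReal_measureReal]

theorem hplus2_le_hplusM_radialCDF_general (ω : Measure Plane) [IsFiniteMeasure ω]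
    (μ : Measure ℝ)
    (hμ : ∀ a b : ℝ, a ≤ b → μ (Set.Ioc a b) =
      ENNReal.ofReal (Function.rightLim (radialCDF ω) b - Function.rightLim (radialCDF ω) a)) :
    Hplus2 ω ≤ HplusM μ := by
  rw [eq_map_norm_of_measure_Ioc ω μ hμ]
  exact hplus2_le_hplusM_map_norm ω

/-- If `ω` is a compactly supported finite nonnegative Borel measure on `ℝ²` with radial
cumulative distribution function `G`, and `dG` is the Lebesgue–Stieltjes measure generated
by `G` (characterized via right limits of `G` by `dG((a,b]) = G(b⁺) - G(a⁺)`), then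
`H⁺(ω) ≤ H⁺(dG)`. -/
theorem hplus2_le_hplusM_radialCDF (ω : Measure Plane) [IsFiniteMeasure ω]
    (hsupp : ∃ s : Set Plane, IsCompact s ∧ ω sᶜ = 0)
    (μ : Measure ℝ)
    (hμ : ∀ a b : ℝ, a ≤ b → μ (Set.Ioc a b) =
      ENNReal.ofReal (Function.rightLim (radialCDF ω) b - Function.rightLim (radialCDF ω) a)) :
    Hplus2 ω ≤ HplusM μ :=
  hplus2_le_hplusM_radialCDF_general ω μ hμ
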